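/- arXiv:1608.03108 — 6 statements merged into one kernel-verified Lean document; each statement's English description precedes it below -/
import Mathlib

section
/- Let X be a complex Banach space, let τ > 0, and let U(t,s) be bounded linear operators on X defined for all real numbers t ≥ s satisfying: U(t,t) = I for all t; U(t,r)∘U(r,s) = U(t,s) whenever t ≥ r ≥ s; U(t+τ, s+τ) = U(t,s) whenever t ≥ s; and there is M₀ > 0 with ‖U(t,s)‖ ≤ M₀ whenever 0 ≤ t − s ≤ τ. Then there exist constants M, ω > 0 such that ‖U(t,s)‖ ≤ M·e^{−ω(t−s)} for all t ≥ s if and only if every λ in the spectrum of U(τ,0) satisfies |λ| < 1. -/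
/-! If `U` is exponentially stable, the powers `U τ 0 ^ n = U (n * τ) 0` tend to zero, which
forces every spectral value of `U τ 0` into the open unit disc. Conversely, Gelfand's formula
gives `‖U τ 0 ^ n‖ ≤ C * r ^ n` for some `r < 1`. After reducing `s` modulo `τ`, the period map
`U (s + τ) s` and the monodromy operator `U τ 0` are products `a * b` and `b * a` of operators of
norm at most `M₀`, so the powers of the period map decay at the same rate uniformly in `s`; the
local bound covers the remaining stretch of length less than `τ`. -/

open Filter Topology

theorem spectrum.norm_lt_one_of_tendsto_pow_zero {𝕜 A : Type*} [NormedField 𝕜] [NormedRing A]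
    [NormedAlgebra 𝕜 A] [CompleteSpace A] {a : A} (ha : Tendsto (a ^ ·) atTop (𝓝 0)) :
    ∀ k ∈ spectrum 𝕜 a, ‖k‖ < 1 := by
  intro k hk
  have hbound (n : ℕ) : ‖k ^ n‖ ≤ ‖a ^ n‖ * ‖(1 : A)‖ :=
    spectrum.norm_le_norm_mul_of_mem (spectrum.pow_mem_pow a n hk)
  have hlim : Tendsto (fun n : ℕ => ‖a ^ n‖ * ‖(1 : A)‖) atTop (𝓝 0) := by
    simpa using (tendsto_norm_zero.comp ha).mul_const ‖(1 : A)‖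
  have : Tendsto (fun n : ℕ => k ^ n) atTop (𝓝 0) := squeeze_zero_norm hbound hlim
  exact tendsto_pow_atTop_nhds_zero_iff_norm_lt_one.mp this

theorem spectralRadius_lt_one_of_forall_norm_lt_one {A : Type*} [NormedRing A]
    [NormedAlgebra ℂ A] [CompleteSpace A] {a : A} (h : ∀ k ∈ spectrum ℂ a, ‖k‖ < 1) :
    spectralRadius ℂ a < 1 := by
  rcases subsingleton_or_nontrivial A with hA | hA
  · simp [spectralRadius, spectrum.of_subsingleton]
  · exact_mod_cast spectrum.spectralRadius_lt_of_forall_lt a (r := 1) fun k hk => h k hk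

theorem exists_norm_pow_le_mul_pow_of_spectralRadius_lt {A : Type*} [NormedRing A]
    [NormedAlgebra ℂ A] [CompleteSpace A] {a : A} {r : ℝ}
    (hr : spectralRadius ℂ a < ENNReal.ofReal r) : ∃ C, ∀ n : ℕ, ‖a ^ n‖ ≤ C * r ^ n := by
  have hr0 : 0 < r := ENNReal.ofReal_pos.mp (pos_of_gt hr)
  have hroot : ∀ᶠ n : ℕ in atTop, ‖a ^ n‖ ^ (1 / n : ℝ) < r := by
    filter_upwards
      [(spectrum.pow_norm_pow_one_div_tendsto_nhds_spectralRadius a).eventually_lt_const hr]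
      with n hn
    exact (ENNReal.ofReal_lt_ofReal_iff hr0).mp hn
  have hbigO : (fun n : ℕ => a ^ n) =O[atTop] fun n => r ^ n := by
    refine Asymptotics.IsBigO.of_bound 1 ?_
    filter_upwards [hroot, eventually_ne_atTop 0] with n hn hn0
    rw [one_mul, Real.norm_of_nonneg (by positivity),
      ← Real.rpow_inv_natCast_pow (norm_nonneg (a ^ n)) hn0, ← one_div]
    exact pow_le_pow_left₀ (by positivity) hn.le n
  obtain ⟨C, hC⟩ := (Asymptotics.isBigO_nat_atTop_iff fun n h => absurd h (by positivity)).mp hbigO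
  exact ⟨C, fun n => by simpa [abs_of_pos hr0] using hC n⟩

theorem norm_mul_pow_succ_le {R : Type*} [SeminormedRing R] (a b : R) (n : ℕ) :
    ‖(a * b) ^ (n + 1)‖ ≤ ‖a‖ * ‖(b * a) ^ n‖ * ‖b‖ := by
  rw [pow_succ, ← mul_assoc, mul_pow_mul]
  exact norm_mul₃_le

theorem pow_nat_floor_div_le_exp {r : ℝ} (hr0 : 0 < r) (hr1 : r < 1) (τ x : ℝ) :
    r ^ ⌊x / τ⌋₊ ≤ r⁻¹ * Real.exp (-(-Real.log r / τ) * x) := by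
  have hfloor : x / τ - 1 ≤ (⌊x / τ⌋₊ : ℝ) := (Nat.sub_one_lt_floor _).le
  calc r ^ ⌊x / τ⌋₊ = r ^ (⌊x / τ⌋₊ : ℝ) := (Real.rpow_natCast r _).symm
    _ ≤ r ^ (x / τ - 1) := Real.rpow_le_rpow_of_exponent_ge hr0 hr1.le hfloor
    _ = r⁻¹ * Real.exp (-(-Real.log r / τ) * x) := by
      rw [Real.rpow_sub_one hr0.ne', Real.rpow_def_of_pos hr0]
      field_simp

def IsExpStable {A : Type*} [Norm A] (U : ℝ → ℝ → A) : Prop :=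
  ∃ M ω : ℝ, 0 < M ∧ 0 < ω ∧ ∀ t s : ℝ, s ≤ t → ‖U t s‖ ≤ M * Real.exp (-ω * (t - s))

theorem IsExpStable.tendsto_shift_nat_mul {A : Type*} [SeminormedAddCommGroup A]
    {U : ℝ → ℝ → A} (hU : IsExpStable U) {τ : ℝ} (hτ : 0 < τ) (s : ℝ) :
    Tendsto (fun n : ℕ => U (s + n * τ) s) atTop (𝓝 0) := by
  obtain ⟨M, ω, -, hω, hbound⟩ := hU
  have hq : Real.exp (-ω * τ) < 1 := Real.exp_lt_one_iff.mpr (by nlinarith)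
  have hgeom : Tendsto (fun n : ℕ => M * Real.exp (-ω * τ) ^ n) atTop (𝓝 0) := by
    simpa using (tendsto_pow_atTop_nhds_zero_of_lt_one (Real.exp_pos _).le hq).const_mul M
  refine squeeze_zero_norm (fun n => ?_) hgeom
  have := hbound (s + n * τ) s (le_add_of_nonneg_right (by positivity))
  rwa [add_sub_cancel_left, show -ω * (n * τ) = n * (-ω * τ) by ring, Real.exp_nat_mul] at this

namespace EvolutionFamily

variable {A : Type*} {τ : ℝ} {U : ℝ → ℝ → A}

theorem shift_int_mul (hPer : ∀ t s : ℝ, s ≤ t → U (t + τ) (s + τ) = U t s) {t s : ℝ}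
    (hst : s ≤ t) (k : ℤ) : U (t + k * τ) (s + k * τ) = U t s := by
  induction k using Int.induction_on with
  | zero => simp
  | succ k ih =>
    rw [← ih, ← hPer (t + (k : ℤ) * τ) (s + (k : ℤ) * τ) (by linarith)]
    push_cast
    ring_nf
  | pred k ih =>
    rw [← ih, ← hPer (t + (-k - 1 : ℤ) * τ) (s + (-k - 1 : ℤ) * τ) (by push_cast; linarith)]
    push_cast
    ring_nf

theorem shift_nat_mul_eq_pow [Monoid A] (hId : ∀ t : ℝ, U t t = 1)
    (hComp : ∀ t r s : ℝ, s ≤ r → r ≤ t → U t r * U r s = U t s)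
    (hPer : ∀ t s : ℝ, s ≤ t → U (t + τ) (s + τ) = U t s) (hτ : 0 ≤ τ) (s : ℝ) (n : ℕ) :
    U (s + n * τ) s = U (s + τ) s ^ n := by
  induction n with
  | zero => simp [hId]
  | succ n ih =>
    have hstep : U (s + τ + n * τ) (s + n * τ) = U (s + τ) s := by
      exact_mod_cast shift_int_mul hPer (by linarith) n
    have hn : 0 ≤ (n : ℝ) * τ := by positivity
    rw [pow_succ', ← ih, ← hstep, hComp _ _ _ (by linarith) (by linarith)]
    push_cast
    ring_nf

variable [NormedRing A]

theorem norm_period_pow_succ_le (hτ : 0 < τ)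
    (hComp : ∀ t r s : ℝ, s ≤ r → r ≤ t → U t r * U r s = U t s)
    (hPer : ∀ t s : ℝ, s ≤ t → U (t + τ) (s + τ) = U t s) {M₀ : ℝ}
    (hBdd : ∀ t s : ℝ, 0 ≤ t - s → t - s ≤ τ → ‖U t s‖ ≤ M₀) (s : ℝ) (n : ℕ) :
    ‖U (s + τ) s ^ (n + 1)‖ ≤ M₀ * ‖U τ 0 ^ n‖ * M₀ := by
  obtain ⟨hs₀, hsτ⟩ : toIcoMod hτ 0 s ∈ Set.Ico 0 τ := toIcoMod_mem_Ico' hτ s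
  set s₀ := toIcoMod hτ 0 s
  have hreduce : U (s + τ) s = U (s₀ + τ) s₀ := by
    rw [← toIcoMod_add_toIcoDiv_zsmul hτ 0 s, zsmul_eq_mul, ← add_right_comm]
    exact shift_int_mul hPer (by linarith) _
  have hperiod : U (s₀ + τ) s₀ = U s₀ 0 * U τ s₀ := by
    have hshift : U (s₀ + τ) τ = U s₀ 0 := by simpa using hPer s₀ 0 hs₀
    rw [← hComp (s₀ + τ) τ s₀ hsτ.le (by linarith), hshift]
  have hmonodromy : U τ 0 = U τ s₀ * U s₀ 0 := (hComp τ s₀ 0 hs₀ hsτ.le).symm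
  have hM₀ : 0 ≤ M₀ := (norm_nonneg _).trans (hBdd s₀ 0 (by linarith) (by linarith))
  rw [hreduce, hperiod, hmonodromy]
  refine (norm_mul_pow_succ_le _ _ n).trans ?_
  gcongr
  · exact hBdd s₀ 0 (by linarith) (by linarith)
  · exact hBdd τ s₀ (by linarith) (by linarith)

theorem norm_shift_nat_mul_le (hτ : 0 < τ) (hId : ∀ t : ℝ, U t t = 1)
    (hComp : ∀ t r s : ℝ, s ≤ r → r ≤ t → U t r * U r s = U t s)
    (hPer : ∀ t s : ℝ, s ≤ t → U (t + τ) (s + τ) = U t s) {M₀ : ℝ} (hM₀ : 0 ≤ M₀)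
    (hBdd : ∀ t s : ℝ, 0 ≤ t - s → t - s ≤ τ → ‖U t s‖ ≤ M₀) {C r : ℝ} (hr : 0 < r)
    (hC : ∀ n : ℕ, ‖U τ 0 ^ n‖ ≤ C * r ^ n) (s : ℝ) (n : ℕ) :
    ‖U (s + n * τ) s‖ ≤ max M₀ (M₀ ^ 2 * C / r) * r ^ n := by
  rw [shift_nat_mul_eq_pow hId hComp hPer hτ.le]
  cases n with
  | zero =>
    rw [pow_zero, pow_zero, mul_one, ← hId s]
    exact (hBdd s s (by simp) (by simp [hτ.le])).trans (le_max_left _ _)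
  | succ n =>
    calc ‖U (s + τ) s ^ (n + 1)‖ ≤ M₀ * ‖U τ 0 ^ n‖ * M₀ :=
          norm_period_pow_succ_le hτ hComp hPer hBdd s n
      _ ≤ M₀ * (C * r ^ n) * M₀ := by gcongr; exact hC n
      _ = M₀ ^ 2 * C / r * r ^ (n + 1) := by field_simp; ring
      _ ≤ max M₀ (M₀ ^ 2 * C / r) * r ^ (n + 1) := by gcongr; exact le_max_right _ _

theorem isExpStable_of_norm_shift_nat_mul_le (hτ : 0 < τ)
    (hComp : ∀ t r s : ℝ, s ≤ r → r ≤ t → U t r * U r s = U t s) {M₀ : ℝ} (hM₀ : 0 < M₀)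
    (hBdd : ∀ t s : ℝ, 0 ≤ t - s → t - s ≤ τ → ‖U t s‖ ≤ M₀) {K r : ℝ} (hK : 0 < K)
    (hr0 : 0 < r) (hr1 : r < 1) (hshift : ∀ (s : ℝ) (n : ℕ), ‖U (s + n * τ) s‖ ≤ K * r ^ n) :
    IsExpStable U := by
  refine ⟨M₀ * K * r⁻¹, -Real.log r / τ, by positivity,
    div_pos (neg_pos.mpr (Real.log_neg hr0 hr1)) hτ, fun t s hst => ?_⟩
  set m := ⌊(t - s) / τ⌋₊
  have hm_le : s + m * τ ≤ t := by
    have := Nat.floor_le (div_nonneg (sub_nonneg.mpr hst) hτ.le)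
    rw [le_div_iff₀ hτ] at this
    linarith
  have hm_lt : t < s + m * τ + τ := by
    have := Nat.lt_floor_add_one ((t - s) / τ)
    rw [div_lt_iff₀ hτ] at this
    linarith
  calc ‖U t s‖ = ‖U t (s + m * τ) * U (s + m * τ) s‖ := by
        rw [hComp t _ s (le_add_of_nonneg_right (by positivity)) hm_le]
    _ ≤ M₀ * (K * r ^ m) :=
        (norm_mul_le _ _).trans (mul_le_mul (hBdd _ _ (by linarith) (by linarith)) (hshift s m)
          (norm_nonneg _) hM₀.le)
    _ ≤ M₀ * (K * (r⁻¹ * Real.exp (-(-Real.log r / τ) * (t - s)))) := by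
        gcongr
        exact pow_nat_floor_div_le_exp hr0 hr1 τ (t - s)
    _ = M₀ * K * r⁻¹ * Real.exp (-(-Real.log r / τ) * (t - s)) := by ring

end EvolutionFamily

/-- A τ-periodic, locally bounded evolution family `U(t,s)` on a complex
Banach space `X` is exponentially stable (`‖U(t,s)‖ ≤ M e^{-ω(t-s)}` for all `t ≥ s`)
if and only if every element of the spectrum of the monodromy operator `U(τ,0)` has
modulus strictly less than one. -/
theorem periodic_evolution_family_exp_stable_iff_spectrum_lt_one
    {X : Type*} [NormedAddCommGroup X] [NormedSpace ℂ X] [CompleteSpace X]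
    (τ : ℝ) (hτ : 0 < τ)
    (U : ℝ → ℝ → (X →L[ℂ] X))
    (hId : ∀ t : ℝ, U t t = 1)
    (hComp : ∀ t r s : ℝ, s ≤ r → r ≤ t → (U t r).comp (U r s) = U t s)
    (hPer : ∀ t s : ℝ, s ≤ t → U (t + τ) (s + τ) = U t s)
    (M₀ : ℝ) (hM₀ : 0 < M₀)
    (hBdd : ∀ t s : ℝ, 0 ≤ t - s → t - s ≤ τ → ‖U t s‖ ≤ M₀) :
    (∃ M ω : ℝ, 0 < M ∧ 0 < ω ∧
        ∀ t s : ℝ, s ≤ t → ‖U t s‖ ≤ M * Real.exp (-ω * (t - s)))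
      ↔ ∀ lam ∈ spectrum ℂ (U τ 0), ‖lam‖ < 1 := by
  have hmonodromy_pow (n : ℕ) : U (n * τ) 0 = U τ 0 ^ n := by
    simpa using EvolutionFamily.shift_nat_mul_eq_pow hId hComp hPer hτ.le 0 n
  refine ⟨fun hstable => ?_, fun hspec => ?_⟩
  · refine spectrum.norm_lt_one_of_tendsto_pow_zero ?_
    simpa [hmonodromy_pow] using IsExpStable.tendsto_shift_nat_mul hstable hτ 0
  · obtain ⟨r, -, hρr, hr1⟩ :=
      ENNReal.lt_iff_exists_real_btwn.mp (spectralRadius_lt_one_of_forall_norm_lt_one hspec)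
    have hr0 : 0 < r := ENNReal.ofReal_pos.mp (pos_of_gt hρr)
    obtain ⟨C, hC⟩ := exists_norm_pow_le_mul_pow_of_spectralRadius_lt hρr
    exact EvolutionFamily.isExpStable_of_norm_shift_nat_mul_le hτ hComp hM₀ hBdd
      (lt_max_of_lt_left hM₀) hr0 (ENNReal.ofReal_lt_one.mp hr1)
      (EvolutionFamily.norm_shift_nat_mul_le hτ hId hComp hPer hM₀.le hBdd hr0 hC)
end

section
/- Consider an exponentially stable discrete-time system, so that |λ| < 1 for every λ in the spectrum of A. Let the input sequences be constant, u_n ≡ u₀ ∈ U and w_n ≡ w₀ ∈ U_d, let x₀ ∈ X, and let y_ref ∈ Y. If the output satisfies ‖y_n − y_ref‖ → 0 as n → ∞, then y_ref = P(1)u₀ + P_d(1)w₀. -/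
open Filter NNReal ENNReal

lemma pow_norm_tendsto_zero' {X : Type*} [NormedAddCommGroup X] [NormedSpace ℂ X] [CompleteSpace X]
    (A : X →L[ℂ] X) (hstab : ∀ lam ∈ spectrum ℂ A, ‖lam‖ < 1) :
    Tendsto (fun n => ‖A ^ n‖) atTop (nhds 0) := by
  cases subsingleton_or_nontrivial X
  · have h0 : ∀ n, (A : X →L[ℂ] X) ^ n = 0 := fun n => Subsingleton.elim _ _
    simpa [h0] using tendsto_const_nhds (x := (0:ℝ)) (f := atTop (α := ℕ))
  · have hρ : spectralRadius ℂ A < 1 := by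
      have := spectrum.spectralRadius_lt_of_forall_lt A (r := 1)
        (fun z hz => by simpa [← NNReal.coe_lt_coe] using hstab z hz)
      simpa using this
    obtain ⟨r, hρr, hr1⟩ := ENNReal.lt_iff_exists_nnreal_btwn.mp hρ
    have hr1' : (r : ℝ) < 1 := by exact_mod_cast hr1
    have hg := spectrum.pow_nnnorm_pow_one_div_tendsto_nhds_spectralRadius A
    have hev : ∀ᶠ n : ℕ in atTop, ((‖A ^ n‖₊ : ℝ≥0∞)) ^ (1 / (n:ℝ)) < (r : ℝ≥0∞) :=
      hg.eventually_lt_const hρr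
    have hev2 : ∀ᶠ n : ℕ in atTop, ‖A ^ n‖ ≤ (r : ℝ) ^ n := by
      filter_upwards [hev, eventually_ge_atTop 1] with n hn hn1
      have hnpos : (0:ℝ) < n := by exact_mod_cast hn1
      have h2 := ENNReal.rpow_lt_rpow hn hnpos
      rw [← ENNReal.rpow_mul, one_div_mul_cancel hnpos.ne', ENNReal.rpow_one,
        ENNReal.rpow_natCast, ← ENNReal.coe_pow, ENNReal.coe_lt_coe] at h2
      exact_mod_cast h2.le
    refine squeeze_zero' (Eventually.of_forall fun n => norm_nonneg _) hev2 ?_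
    exact tendsto_pow_atTop_nhds_zero_of_lt_one (by positivity) hr1'


/-- For an exponentially stable discrete-time system with constant inputs
`u_n ≡ u₀`, `w_n ≡ w₀`, if the output converges to `y_ref`, then
`y_ref = P(1)u₀ + P_d(1)w₀`. -/
theorem limit_output_eq_transfer_value
    {X U Ud Y : Type*}
    [NormedAddCommGroup X] [NormedSpace ℂ X] [CompleteSpace X]
    [NormedAddCommGroup U] [InnerProductSpace ℂ U] [CompleteSpace U]
    [NormedAddCommGroup Ud] [InnerProductSpace ℂ Ud] [CompleteSpace Ud]
    [NormedAddCommGroup Y] [InnerProductSpace ℂ Y] [CompleteSpace Y]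
    (A : X →L[ℂ] X) (B : U →L[ℂ] X) (Bd : Ud →L[ℂ] X)
    (C : X →L[ℂ] Y) (D : U →L[ℂ] Y) (Dd : Ud →L[ℂ] Y)
    (hstab : ∀ lam ∈ spectrum ℂ A, ‖lam‖ < 1)
    (x₀ : X) (u₀ : U) (w₀ : Ud) (yref : Y) (x : ℕ → X) (y : ℕ → Y)
    (hx0 : x 0 = x₀)
    (hx : ∀ n, x (n + 1) = A (x n) + B u₀ + Bd w₀)
    (hy : ∀ n, y n = C (x n) + D u₀ + Dd w₀)
    (hconv : Filter.Tendsto (fun n => ‖y n - yref‖) Filter.atTop (nhds 0)) :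
    yref = (C (Ring.inverse ((1 : X →L[ℂ] X) - A) (B u₀)) + D u₀)
        + (C (Ring.inverse ((1 : X →L[ℂ] X) - A) (Bd w₀)) + Dd w₀) := by
  have h1s : (1:ℂ) ∉ spectrum ℂ A := fun h => absurd (hstab 1 h) (by simp)
  have hunit : IsUnit ((1 : X →L[ℂ] X) - A) := by
    have := spectrum.notMem_iff.mp h1s
    simpa using this
  set z := Ring.inverse ((1 : X →L[ℂ] X) - A) (B u₀ + Bd w₀) with hzdef
  have hz1 : ((1 : X →L[ℂ] X) - A) z = B u₀ + Bd w₀ := by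
    have h2 := Ring.mul_inverse_cancel _ hunit
    have h3 := congrArg (fun T : X →L[ℂ] X => T (B u₀ + Bd w₀)) h2
    simpa only [ContinuousLinearMap.mul_apply, ContinuousLinearMap.one_apply] using h3
  have hzfix : z = A z + B u₀ + Bd w₀ := by
    have h4 : z - A z = B u₀ + Bd w₀ := by
      simpa only [ContinuousLinearMap.sub_apply, ContinuousLinearMap.one_apply] using hz1
    calc z = A z + (z - A z) := by abel
      _ = A z + B u₀ + Bd w₀ := by rw [h4, ← add_assoc]
  have hxn : ∀ n, x n = (A ^ n) (x₀ - z) + z := by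
    intro n
    induction n with
    | zero => simp [hx0]
    | succ n ih =>
      have hps : (A ^ (n+1)) (x₀ - z) = A ((A ^ n) (x₀ - z)) := by
        rw [pow_succ']; rfl
      rw [hx n, ih]
      calc A ((A ^ n) (x₀ - z) + z) + B u₀ + Bd w₀
          = A ((A ^ n) (x₀ - z)) + (A z + B u₀ + Bd w₀) := by rw [map_add]; abel
        _ = (A ^ (n+1)) (x₀ - z) + z := by rw [← hzfix, hps]
  have hA := pow_norm_tendsto_zero' A hstab
  have hAv : Tendsto (fun n => (A ^ n) (x₀ - z)) atTop (nhds 0) := by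
    refine squeeze_zero_norm (fun n => (A ^ n).le_opNorm _) ?_
    have := hA.mul_const ‖x₀ - z‖
    simpa using this
  have hxlim : Tendsto x atTop (nhds z) := by
    have := hAv.add_const z
    rw [zero_add] at this
    exact this.congr fun n => (hxn n).symm
  have hylim : Tendsto y atTop (nhds (C z + D u₀ + Dd w₀)) := by
    have h5 := (C.continuous.tendsto z).comp hxlim
    have h6 := (h5.add_const (D u₀)).add_const (Dd w₀)
    exact h6.congr fun n => (hy n).symm
  have hyref : Tendsto y atTop (nhds yref) :=
    tendsto_iff_norm_sub_tendsto_zero.mpr hconv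
  have heq : C z + D u₀ + Dd w₀ = yref := tendsto_nhds_unique hylim hyref
  have hzadd : z = Ring.inverse ((1 : X →L[ℂ] X) - A) (B u₀)
      + Ring.inverse ((1 : X →L[ℂ] X) - A) (Bd w₀) := map_add _ _ _
  rw [← heq, hzadd, map_add]
  abel
end

section
/- Consider a discrete-time system such that A is strongly stable, i.e. ‖Aⁿ x‖ → 0 as n → ∞ for every x ∈ X, and such that 1 lies in the resolvent set of A. Then for every initial state x₀ ∈ X and all constant input sequences u_n ≡ u₀ ∈ U and w_n ≡ w₀ ∈ U_d, the output satisfies ‖y_n − (P(1)u₀ + P_d(1)w₀)‖ → 0 as n → ∞. -/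
/-- For a discrete-time system whose operator `A` is strongly stable
(`‖Aⁿx‖ → 0` for every `x`) and with `1` in the resolvent set of `A`, the output
corresponding to constant inputs `u_n ≡ u₀`, `w_n ≡ w₀` converges to
`P(1)u₀ + P_d(1)w₀`. -/
theorem output_convergence_strongly_stable
    {X U Ud Y : Type*}
    [NormedAddCommGroup X] [NormedSpace ℂ X] [CompleteSpace X]
    [NormedAddCommGroup U] [InnerProductSpace ℂ U] [CompleteSpace U]
    [NormedAddCommGroup Ud] [InnerProductSpace ℂ Ud] [CompleteSpace Ud]
    [NormedAddCommGroup Y] [InnerProductSpace ℂ Y] [CompleteSpace Y]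
    (A : X →L[ℂ] X) (B : U →L[ℂ] X) (Bd : Ud →L[ℂ] X)
    (C : X →L[ℂ] Y) (D : U →L[ℂ] Y) (Dd : Ud →L[ℂ] Y)
    (hstrong : ∀ x : X, Filter.Tendsto (fun n : ℕ => ‖(A ^ n) x‖) Filter.atTop (nhds 0))
    (hres : (1 : ℂ) ∈ resolventSet ℂ A)
    (x₀ : X) (u₀ : U) (w₀ : Ud) (x : ℕ → X) (y : ℕ → Y)
    (hx0 : x 0 = x₀)
    (hx : ∀ n, x (n + 1) = A (x n) + B u₀ + Bd w₀)
    (hy : ∀ n, y n = C (x n) + D u₀ + Dd w₀) :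
    Filter.Tendsto
      (fun n => ‖y n - ((C (Ring.inverse ((1 : X →L[ℂ] X) - A) (B u₀)) + D u₀)
          + (C (Ring.inverse ((1 : X →L[ℂ] X) - A) (Bd w₀)) + Dd w₀))‖)
      Filter.atTop (nhds 0) := by
  have hunit : IsUnit ((1 : X →L[ℂ] X) - A) := by
    have := spectrum.mem_resolventSet_iff.mp hres
    simpa using this
  set T := Ring.inverse ((1 : X →L[ℂ] X) - A) with hT
  set z : X := T (B u₀ + Bd w₀) with hz
  have hzfix : z - A z = B u₀ + Bd w₀ := by
    have h1 : ((1 : X →L[ℂ] X) - A) * T = 1 := Ring.mul_inverse_cancel _ hunit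
    have h2 : (((1 : X →L[ℂ] X) - A) * T) (B u₀ + Bd w₀) = B u₀ + Bd w₀ := by
      rw [h1]; rfl
    rw [ContinuousLinearMap.mul_apply, ContinuousLinearMap.sub_apply,
      ContinuousLinearMap.one_apply] at h2
    exact h2
  have hdiff : ∀ n, x n - z = (A ^ n) (x₀ - z) := by
    intro n
    induction n with
    | zero => simp [hx0]
    | succ n ih =>
      have : x (n + 1) - z = A (x n - z) := by
        rw [hx n, map_sub,
          show A (x n) + B u₀ + Bd w₀ - z
            = A (x n) - A z + (B u₀ + Bd w₀ - (z - A z)) by abel,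
          ← hzfix, sub_self, add_zero]
      rw [this, ih, pow_succ']
      rfl
  have hCz : (C (T (B u₀)) + D u₀) + (C (T (Bd w₀)) + Dd w₀)
      = C z + D u₀ + Dd w₀ := by
    rw [hz, map_add, map_add]; abel
  have key : ∀ n, y n - ((C (T (B u₀)) + D u₀) + (C (T (Bd w₀)) + Dd w₀))
      = C ((A ^ n) (x₀ - z)) := by
    intro n
    rw [hCz, hy n, ← hdiff n, map_sub]
    abel
  simp only [key]
  have hb : ∀ n, ‖C ((A ^ n) (x₀ - z))‖ ≤ ‖C‖ * ‖(A ^ n) (x₀ - z)‖ :=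
    fun n => C.le_opNorm _
  have hlim : Filter.Tendsto (fun n : ℕ => ‖C‖ * ‖(A ^ n) (x₀ - z)‖)
      Filter.atTop (nhds 0) := by
    simpa using (hstrong (x₀ - z)).const_mul ‖C‖
  exact squeeze_zero (fun n => norm_nonneg _) hb hlim
end

section
/- Assume μ_k lies in the resolvent set of A for every k ∈ {1,…,q} and that the closed-loop system is exponentially stable. Then the controller solves the output regulation problem if and only if for every k ∈ {1,…,q} there exists z_k ∈ Z such that P(μ_k)·K z_k = −F φ_k − P_d(μ_k)·E φ_k and (μ_k I − G₁) z_k = 0. -/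
noncomputable section

open ContinuousLinearMap

variable {X Z U Ud Y W : Type*}
  [NormedAddCommGroup X] [NormedSpace ℂ X]
  [NormedAddCommGroup Z] [NormedSpace ℂ Z]
  [NormedAddCommGroup U] [NormedSpace ℂ U]
  [NormedAddCommGroup Ud] [NormedSpace ℂ Ud]
  [NormedAddCommGroup Y] [NormedSpace ℂ Y]
  [NormedAddCommGroup W] [NormedSpace ℂ W]

/-- The closed-loop system operator `A_e` on `X × Z`:
`A_e(x,z) = (Ax + BKz, G₂Cx + G₁z + G₂DKz)`. -/
def Ae (A : X →L[ℂ] X) (B : U →L[ℂ] X) (C : X →L[ℂ] Y) (D : U →L[ℂ] Y)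
    (G₁ : Z →L[ℂ] Z) (G₂ : Y →L[ℂ] Z) (K : Z →L[ℂ] U) : (X × Z) →L[ℂ] (X × Z) :=
  ((A.comp (fst ℂ X Z)) + ((B.comp K).comp (snd ℂ X Z))).prod
    ((G₂.comp (C.comp (fst ℂ X Z))) + (G₁.comp (snd ℂ X Z))
      + ((G₂.comp (D.comp K)).comp (snd ℂ X Z)))

/-- The closed-loop input operator `B_e v = (B_d E v, G₂(D_d E v + F v))`. -/
def Be (Bd : Ud →L[ℂ] X) (Dd : Ud →L[ℂ] Y) (E : W →L[ℂ] Ud) (F : W →L[ℂ] Y)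
    (G₂ : Y →L[ℂ] Z) : W →L[ℂ] (X × Z) :=
  (Bd.comp E).prod (G₂.comp ((Dd.comp E) + F))

/-- The closed-loop output operator `C_e(x,z) = Cx + DKz`. -/
def Ce (C : X →L[ℂ] Y) (D : U →L[ℂ] Y) (K : Z →L[ℂ] U) : (X × Z) →L[ℂ] Y :=
  C.comp (fst ℂ X Z) + (D.comp K).comp (snd ℂ X Z)

/-- The closed-loop feedthrough operator `D_e = D_d E + F`. -/
def De (Dd : Ud →L[ℂ] Y) (E : W →L[ℂ] Ud) (F : W →L[ℂ] Y) : W →L[ℂ] Y :=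
  (Dd.comp E) + F

/-- The controller `(G₁, G₂, K)` solves the output regulation problem: the closed-loop
system is exponentially stable and the regulation error decays at a uniform exponential
rate for all initial states of the system, the controller and the exosystem. -/
def SolvesORP (A : X →L[ℂ] X) (B : U →L[ℂ] X) (Bd : Ud →L[ℂ] X)
    (C : X →L[ℂ] Y) (D : U →L[ℂ] Y) (Dd : Ud →L[ℂ] Y)
    (S : W →L[ℂ] W) (E : W →L[ℂ] Ud) (F : W →L[ℂ] Y)
    (G₁ : Z →L[ℂ] Z) (G₂ : Y →L[ℂ] Z) (K : Z →L[ℂ] U) : Prop :=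
  (∀ lam ∈ spectrum ℂ (Ae A B C D G₁ G₂ K), ‖lam‖ < 1) ∧
  ∃ M α : ℝ, 0 < M ∧ 0 < α ∧
    ∀ (x₀ : X) (z₀ : Z) (v₀ : W) (v : ℕ → W) (xe : ℕ → X × Z),
      v 0 = v₀ → (∀ n, v (n + 1) = S (v n)) →
      xe 0 = (x₀, z₀) →
      (∀ n, xe (n + 1) = Ae A B C D G₁ G₂ K (xe n) + Be Bd Dd E F G₂ (v n)) →
      ∀ n : ℕ, ‖Ce C D K (xe n) + De Dd E F (v n)‖
        ≤ M * Real.exp (-(α * n)) * (‖x₀‖ + ‖z₀‖ + ‖v₀‖)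

/-- The controller `(G₁, G₂, K)` solves the robust output regulation problem: it solves
the output regulation problem and retains exponential decay of the regulation error for
every perturbation of the operators `(A, B, B_d, C, D, D_d, E, F)` that preserves the
exponential stability of the closed-loop system. -/
def SolvesRORP (A : X →L[ℂ] X) (B : U →L[ℂ] X) (Bd : Ud →L[ℂ] X)
    (C : X →L[ℂ] Y) (D : U →L[ℂ] Y) (Dd : Ud →L[ℂ] Y)
    (S : W →L[ℂ] W) (E : W →L[ℂ] Ud) (F : W →L[ℂ] Y)
    (G₁ : Z →L[ℂ] Z) (G₂ : Y →L[ℂ] Z) (K : Z →L[ℂ] U) : Prop :=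
  SolvesORP A B Bd C D Dd S E F G₁ G₂ K ∧
  ∀ (A' : X →L[ℂ] X) (B' : U →L[ℂ] X) (Bd' : Ud →L[ℂ] X)
    (C' : X →L[ℂ] Y) (D' : U →L[ℂ] Y) (Dd' : Ud →L[ℂ] Y)
    (E' : W →L[ℂ] Ud) (F' : W →L[ℂ] Y),
    (∀ lam ∈ spectrum ℂ (Ae A' B' C' D' G₁ G₂ K), ‖lam‖ < 1) →
    ∃ M α : ℝ, 0 < M ∧ 0 < α ∧
      ∀ (x₀ : X) (z₀ : Z) (v₀ : W) (v : ℕ → W) (xe : ℕ → X × Z),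
        v 0 = v₀ → (∀ n, v (n + 1) = S (v n)) →
        xe 0 = (x₀, z₀) →
        (∀ n, xe (n + 1) = Ae A' B' C' D' G₁ G₂ K (xe n) + Be Bd' Dd' E' F' G₂ (v n)) →
        ∀ n : ℕ, ‖Ce C' D' K (xe n) + De Dd' E' F' (v n)‖
          ≤ M * Real.exp (-(α * n)) * (‖x₀‖ + ‖z₀‖ + ‖v₀‖)

open Filter Topology Asymptotics

/-! If `Γ : ℂ^q → X × Z` solves the Sylvester equation `Γ S = A_e Γ + B_e`, then along every
closed-loop trajectory `x_e(n) - Γ v(n) = A_eⁿ (x_e(0) - Γ v(0))`; if moreover `C_e Γ + D_e = 0`,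
the error is `C_e A_eⁿ (x_e(0) - Γ v(0))`, which decays exponentially because, by Gelfand's
formula, `‖A_eⁿ‖ ≤ M rⁿ` for some `r < 1`.

Conversely, `μ_k` lies on the unit circle, hence outside the spectrum of `A_e`, so there is
`Σ_k` with `A_e Σ_k + B_e φ_k = μ_k Σ_k`. Then `v(n) = μ_kⁿ φ_k`, `x_e(n) = μ_kⁿ Σ_k` is a
closed-loop trajectory whose error `μ_kⁿ (C_e Σ_k + D_e φ_k)` has constant norm, so decay forces
`C_e Σ_k + D_e φ_k = 0`. As `S` is diagonal, the columns `Σ_k` assemble into a solution `Γ` of the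
Sylvester equation, and writing `Σ_k = (x_k, z_k)` and eliminating
`x_k = (μ_k - A)⁻¹ (B K z_k + B_d E φ_k)` turns the two conditions on `Σ_k` into the regulator
constraints on `z_k`. -/

theorem exists_norm_pow_le_mul_pow_of_spectrum_subset_ball {A : Type*} [NormedRing A]
    [NormedAlgebra ℂ A] [CompleteSpace A] (a : A) (h : ∀ z ∈ spectrum ℂ a, ‖z‖ < 1) :
    ∃ r : ℝ, 0 < r ∧ r < 1 ∧ ∃ M > 0, ∀ n : ℕ, ‖a ^ n‖ ≤ M * r ^ n := by
  have hρ : spectralRadius ℂ a < 1 := by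
    rcases (spectrum ℂ a).eq_empty_or_nonempty with hσ | hσ
    · simp [spectralRadius, hσ]
    · exact_mod_cast spectrum.spectralRadius_lt_of_forall_lt_of_nonempty hσ (r := 1)
        fun z hz => by simpa [← NNReal.coe_lt_coe] using h z hz
  obtain ⟨r, hρr, hr1⟩ := ENNReal.lt_iff_exists_nnreal_btwn.mp hρ
  have hr0 : (0 : ℝ) < r := by simpa using zero_le.trans_lt hρr
  have hgelfand := spectrum.pow_norm_pow_one_div_tendsto_nhds_spectralRadius a
  have hev : ∀ᶠ n : ℕ in atTop, ‖a ^ n‖ ≤ 1 * ‖(r : ℝ) ^ n‖ := by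
    filter_upwards [hgelfand.eventually_lt_const hρr, eventually_gt_atTop 0] with n hn hn0
    rw [ENNReal.ofReal_lt_coe_iff (by positivity), one_div] at hn
    have := (Real.rpow_inv_lt_iff_of_pos (norm_nonneg (a ^ n)) r.2 (Nat.cast_pos.mpr hn0)).mp hn
    rw [Real.rpow_natCast] at this
    simpa [abs_of_pos hr0] using this.le
  obtain ⟨M, hM, hbound⟩ := bound_of_isBigO_nat_atTop (IsBigO.of_bound 1 hev)
  exact ⟨r, hr0, by exact_mod_cast hr1, M, hM, fun n => by
    simpa [abs_of_pos hr0] using hbound (pow_ne_zero n hr0.ne')⟩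

theorem ContinuousLinearMap.ring_inverse_apply_eq_iff {R V : Type*} [Semiring R]
    [TopologicalSpace V] [AddCommMonoid V] [Module R V] [ContinuousAdd V] {T : V →L[R] V}
    (hT : IsUnit T) {x y : V} : Ring.inverse T y = x ↔ T x = y := by
  constructor <;> rintro rfl
  · rw [← mul_apply_eq_comp, Ring.mul_inverse_cancel T hT, one_apply_eq_self]
  · rw [← mul_apply_eq_comp, Ring.inverse_mul_cancel T hT, one_apply_eq_self]

theorem ContinuousLinearMap.exists_add_eq_smul_of_mem_resolventSet {𝕜 V : Type*} [Field 𝕜]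
    [TopologicalSpace V] [AddCommGroup V] [Module 𝕜 V] [IsTopologicalAddGroup V]
    [ContinuousConstSMul 𝕜 V] {T : V →L[𝕜] V} {μ : 𝕜}
    (hμ : μ ∈ resolventSet 𝕜 T) (y : V) : ∃ p, T p + y = μ • p := by
  obtain ⟨p, rfl⟩ : ∃ p, (algebraMap 𝕜 (V →L[𝕜] V) μ - T) p = y :=
    ⟨_, (ring_inverse_apply_eq_iff hμ).mp rfl⟩
  exact ⟨p, by simp [Algebra.algebraMap_eq_smul_one]⟩

section ClosedLoop

variable (A : X →L[ℂ] X) (B : U →L[ℂ] X) (Bd : Ud →L[ℂ] X) (C : X →L[ℂ] Y) (D : U →L[ℂ] Y)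
  (Dd : Ud →L[ℂ] Y) (E : W →L[ℂ] Ud) (F : W →L[ℂ] Y) (G₁ : Z →L[ℂ] Z) (G₂ : Y →L[ℂ] Z)
  (K : Z →L[ℂ] U)

@[simp]
theorem Ae_apply (p : X × Z) :
    Ae A B C D G₁ G₂ K p = (A p.1 + B (K p.2), G₂ (C p.1) + G₁ p.2 + G₂ (D (K p.2))) :=
  rfl

@[simp]
theorem Be_apply (w : W) : Be Bd Dd E F G₂ w = (Bd (E w), G₂ (Dd (E w) + F w)) :=
  rfl

@[simp]
theorem Ce_apply (p : X × Z) : Ce C D K p = C p.1 + D (K p.2) :=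
  rfl

@[simp]
theorem De_apply (w : W) : De Dd E F w = Dd (E w) + F w :=
  rfl

variable {A}

theorem exists_closedLoop_regulating_state_iff {μ : ℂ} (hμ : μ ∈ resolventSet ℂ A) (w : W) :
    (∃ p : X × Z, Ae A B C D G₁ G₂ K p + Be Bd Dd E F G₂ w = μ • p ∧
        Ce C D K p + De Dd E F w = 0) ↔
      ∃ z : Z, C (Ring.inverse (algebraMap ℂ (X →L[ℂ] X) μ - A) (B (K z))) + D (K z)
          = -(F w) - (C (Ring.inverse (algebraMap ℂ (X →L[ℂ] X) μ - A) (Bd (E w))) + Dd (E w))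
        ∧ μ • z - G₁ z = 0 := by
  set R := Ring.inverse (algebraMap ℂ (X →L[ℂ] X) μ - A)
  have hstate : ∀ x z, A x + B (K z) + Bd (E w) = μ • x ↔ x = R (B (K z) + Bd (E w)) := by
    intro x z
    rw [@eq_comm _ x, ContinuousLinearMap.ring_inverse_apply_eq_iff hμ]
    simp only [Algebra.algebraMap_eq_smul_one, sub_apply, smul_apply, one_apply_eq_self]
    rw [sub_eq_iff_eq_add', add_assoc, eq_comm]
  have hcontroller : ∀ x z, G₂ (C x) + G₁ z + G₂ (D (K z)) + G₂ (Dd (E w) + F w)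
      = G₁ z + G₂ (C x + D (K z) + (Dd (E w) + F w)) := by
    intro x z
    simp only [map_add]
    abel
  constructor
  · rintro ⟨⟨x, z⟩, hp, he⟩
    simp only [Ae_apply, Be_apply, Ce_apply, De_apply, Prod.ext_iff, Prod.fst_add, Prod.snd_add,
      Prod.smul_fst, Prod.smul_snd] at hp he
    obtain ⟨hx, hz⟩ := hp
    rw [hstate] at hx
    subst hx
    refine ⟨z, ?_, ?_⟩
    · rw [map_add, map_add] at he
      linear_combination (norm := abel) he
    · rw [hcontroller, he, map_zero, add_zero] at hz
      rw [hz, sub_self]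
  · rintro ⟨z, hreg, hz⟩
    have he : C (R (B (K z) + Bd (E w))) + D (K z) + (Dd (E w) + F w) = 0 := by
      rw [map_add, map_add]
      linear_combination (norm := abel) hreg
    refine ⟨(R (B (K z) + Bd (E w)), z), Prod.ext ?_ ?_, he⟩
    · exact (hstate _ z).mpr rfl
    · simp only [Ae_apply, Be_apply, Prod.snd_add, Prod.smul_snd]
      rw [hcontroller, he, map_zero, add_zero, sub_eq_zero.mp hz]

end ClosedLoop

section Sylvester

variable {V : Type*} [NormedAddCommGroup V] [NormedSpace ℂ V]

theorem sub_sylvester_eq_pow_apply {T : V →L[ℂ] V} {Bv : W →L[ℂ] V} {S : W →L[ℂ] W}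
    {Γ : W →L[ℂ] V} (hΓ : T ∘L Γ + Bv = Γ ∘L S) {v : ℕ → W} {x : ℕ → V}
    (hv : ∀ n, v (n + 1) = S (v n)) (hx : ∀ n, x (n + 1) = T (x n) + Bv (v n)) (n : ℕ) :
    x n - Γ (v n) = (T ^ n) (x 0 - Γ (v 0)) := by
  induction n with
  | zero => rw [pow_zero, one_apply_eq_self]
  | succ n ih =>
    have hΓv : Γ (S (v n)) = T (Γ (v n)) + Bv (v n) := (DFunLike.congr_fun hΓ (v n)).symm
    rw [hx, hv, hΓv, pow_succ', mul_apply_eq_comp, ← ih, map_sub]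
    abel

variable {q : ℕ}

theorem pi_smul_proj_apply_single (μ : Fin q → ℂ) (k : Fin q) :
    (ContinuousLinearMap.pi fun j => μ j • ContinuousLinearMap.proj j :
        (Fin q → ℂ) →L[ℂ] Fin q → ℂ) (Pi.single k 1)
      = μ k • (Pi.single k 1 : Fin q → ℂ) := by
  ext j
  rcases eq_or_ne j k with rfl | h <;> simp [*]

theorem ContinuousLinearMap.ext_pi_single {f g : (Fin q → ℂ) →L[ℂ] V}
    (h : ∀ k, f (Pi.single k 1) = g (Pi.single k 1)) :
    f = g :=
  ContinuousLinearMap.coe_injective <| LinearMap.pi_ext' fun k => LinearMap.ext_ring (h k)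

theorem sum_smulRight_apply_single (p : Fin q → V) (k : Fin q) :
    (∑ j, (ContinuousLinearMap.proj j).smulRight (p j) : (Fin q → ℂ) →L[ℂ] V) (Pi.single k 1)
      = p k := by
  simp [Pi.single_apply]

theorem sylvester_of_diagonal {μ : Fin q → ℂ} {T : V →L[ℂ] V} {Bv : (Fin q → ℂ) →L[ℂ] V}
    {p : Fin q → V} (hp : ∀ k, T (p k) + Bv (Pi.single k 1) = μ k • p k) :
    T ∘L (∑ j, (ContinuousLinearMap.proj j).smulRight (p j)) + Bv
      = (∑ j, (ContinuousLinearMap.proj j).smulRight (p j)) ∘L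
          (ContinuousLinearMap.pi fun j => μ j • ContinuousLinearMap.proj j) :=
  ContinuousLinearMap.ext_pi_single fun k => by
    rw [add_apply, comp_apply, comp_apply, pi_smul_proj_apply_single, map_smul,
      sum_smulRight_apply_single, hp]

theorem comp_sum_smulRight_add_eq_zero {Cv : V →L[ℂ] Y} {Dv : (Fin q → ℂ) →L[ℂ] Y}
    {p : Fin q → V} (hp : ∀ k, Cv (p k) + Dv (Pi.single k 1) = 0) :
    Cv ∘L (∑ j, (ContinuousLinearMap.proj j).smulRight (p j)) + Dv = 0 :=
  ContinuousLinearMap.ext_pi_single fun k => by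
    rw [add_apply, comp_apply, sum_smulRight_apply_single, hp, zero_apply]

end Sylvester

section Regulation

variable {A : X →L[ℂ] X} {B : U →L[ℂ] X} {Bd : Ud →L[ℂ] X} {C : X →L[ℂ] Y} {D : U →L[ℂ] Y}
  {Dd : Ud →L[ℂ] Y} {S : W →L[ℂ] W} {E : W →L[ℂ] Ud} {F : W →L[ℂ] Y} {G₁ : Z →L[ℂ] Z}
  {G₂ : Y →L[ℂ] Z} {K : Z →L[ℂ] U}

theorem solvesORP_of_sylvester [CompleteSpace X] [CompleteSpace Z]
    (hCL : ∀ lam ∈ spectrum ℂ (Ae A B C D G₁ G₂ K), ‖lam‖ < 1) (Γ : W →L[ℂ] X × Z)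
    (hΓ : Ae A B C D G₁ G₂ K ∘L Γ + Be Bd Dd E F G₂ = Γ ∘L S)
    (hreg : Ce C D K ∘L Γ + De Dd E F = 0) :
    SolvesORP A B Bd C D Dd S E F G₁ G₂ K := by
  refine ⟨hCL, ?_⟩
  obtain ⟨r, hr0, hr1, M, hM, hpow⟩ := exists_norm_pow_le_mul_pow_of_spectrum_subset_ball _ hCL
  refine ⟨(‖Ce C D K‖ + 1) * M * (‖Γ‖ + 1), -Real.log r, by positivity,
    neg_pos.mpr (Real.log_neg hr0 hr1), ?_⟩
  rintro x₀ z₀ v₀ v xe rfl hv hxe0 hxe n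
  set N := ‖x₀‖ + ‖z₀‖ + ‖v 0‖
  have herr : Ce C D K (xe n) + De Dd E F (v n)
      = Ce C D K ((Ae A B C D G₁ G₂ K ^ n) ((x₀, z₀) - Γ (v 0))) := by
    have h0 := DFunLike.congr_fun hreg (v n)
    rw [add_apply, comp_apply, zero_apply] at h0
    rw [← hxe0, ← sub_sylvester_eq_pow_apply hΓ hv hxe n, map_sub]
    linear_combination (norm := abel) h0
  have hinit : ‖(x₀, z₀) - Γ (v 0)‖ ≤ (‖Γ‖ + 1) * N := by
    calc ‖(x₀, z₀) - Γ (v 0)‖ ≤ (‖x₀‖ + ‖z₀‖) + ‖Γ‖ * ‖v 0‖ :=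
          (norm_sub_le _ _).trans (add_le_add (max_le_add_of_nonneg (norm_nonneg _)
            (norm_nonneg _)) (Γ.le_opNorm _))
      _ ≤ (‖Γ‖ + 1) * N := by
          nlinarith [norm_nonneg x₀, norm_nonneg z₀, norm_nonneg (v 0), norm_nonneg Γ]
  have hexp : Real.exp (-(-Real.log r * n)) = r ^ n := by
    rw [neg_mul, neg_neg, mul_comm, Real.exp_nat_mul, Real.exp_log hr0]
  rw [herr, hexp]
  calc ‖Ce C D K ((Ae A B C D G₁ G₂ K ^ n) ((x₀, z₀) - Γ (v 0)))‖
      ≤ ‖Ce C D K‖ * (M * r ^ n * ((‖Γ‖ + 1) * N)) :=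
        (Ce C D K).le_opNorm_of_le (((Ae A B C D G₁ G₂ K ^ n).le_opNorm _).trans
          (mul_le_mul (hpow n) hinit (norm_nonneg _) (by positivity)))
    _ ≤ (‖Ce C D K‖ + 1) * M * (‖Γ‖ + 1) * r ^ n * N := by
        have : 0 ≤ M * r ^ n * ((‖Γ‖ + 1) * N) := by positivity
        nlinarith

theorem output_eq_zero_of_solvesORP (h : SolvesORP A B Bd C D Dd S E F G₁ G₂ K) {μ : ℂ}
    (hμ : ‖μ‖ = 1) {w : W} (hw : S w = μ • w) {p : X × Z}
    (hp : Ae A B C D G₁ G₂ K p + Be Bd Dd E F G₂ w = μ • p) :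
    Ce C D K p + De Dd E F w = 0 := by
  obtain ⟨-, M, α, -, hα, hbound⟩ := h
  have hconst (n : ℕ) : ‖Ce C D K p + De Dd E F w‖
      ≤ M * Real.exp (-(α * n)) * (‖p.1‖ + ‖p.2‖ + ‖w‖) := by
    have h := hbound p.1 p.2 w (fun n => μ ^ n • w) (fun n => μ ^ n • p) (one_smul _ _)
      (fun n => by rw [map_smul, hw, smul_smul, pow_succ]) (by simp)
      (fun n => by rw [map_smul, map_smul, ← smul_add, hp, smul_smul, pow_succ]) n
    rwa [map_smul, map_smul, ← smul_add, norm_smul, norm_pow, hμ, one_pow, one_mul] at h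
  have hlim : Tendsto (fun n : ℕ => M * Real.exp (-(α * n)) * (‖p.1‖ + ‖p.2‖ + ‖w‖)) atTop
      (𝓝 0) := by
    have h := Real.tendsto_exp_neg_atTop_nhds_zero.comp
      (tendsto_natCast_atTop_atTop.const_mul_atTop hα)
    simpa using (h.const_mul M).mul_const (‖p.1‖ + ‖p.2‖ + ‖w‖)
  exact norm_le_zero_iff.mp (ge_of_tendsto' hlim hconst)

end Regulation

theorem orp_iff_regulator_constraints_general
    {X Z U Ud Y : Type*}
    [NormedAddCommGroup X] [NormedSpace ℂ X] [CompleteSpace X]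
    [NormedAddCommGroup Z] [NormedSpace ℂ Z] [CompleteSpace Z]
    [NormedAddCommGroup U] [InnerProductSpace ℂ U]
    [NormedAddCommGroup Ud] [InnerProductSpace ℂ Ud]
    [NormedAddCommGroup Y] [InnerProductSpace ℂ Y]
    (A : X →L[ℂ] X) (B : U →L[ℂ] X) (Bd : Ud →L[ℂ] X)
    (C : X →L[ℂ] Y) (D : U →L[ℂ] Y) (Dd : Ud →L[ℂ] Y)
    (q : ℕ) (μ : Fin q → ℂ) (hμ : ∀ k, ‖μ k‖ = 1)
    (E : (Fin q → ℂ) →L[ℂ] Ud) (F : (Fin q → ℂ) →L[ℂ] Y)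
    (G₁ : Z →L[ℂ] Z) (G₂ : Y →L[ℂ] Z) (K : Z →L[ℂ] U)
    (hres : ∀ k, μ k ∈ resolventSet ℂ A)
    (hCL : ∀ lam ∈ spectrum ℂ (Ae A B C D G₁ G₂ K), ‖lam‖ < 1) :
    SolvesORP A B Bd C D Dd
        (ContinuousLinearMap.pi fun k => μ k • ContinuousLinearMap.proj k) E F G₁ G₂ K
      ↔ ∀ k : Fin q, ∃ zk : Z,
          (C (Ring.inverse (algebraMap ℂ (X →L[ℂ] X) (μ k) - A) (B (K zk))) + D (K zk))
            = -(F (Pi.single k 1))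
              - (C (Ring.inverse (algebraMap ℂ (X →L[ℂ] X) (μ k) - A)
                    (Bd (E (Pi.single k 1)))) + Dd (E (Pi.single k 1)))
          ∧ μ k • zk - G₁ zk = 0 := by
  simp only [← exists_closedLoop_regulating_state_iff B Bd C D Dd E F G₁ G₂ K (hres _)]
  constructor
  · intro h k
    have hμk : μ k ∈ resolventSet ℂ (Ae A B C D G₁ G₂ K) :=
      spectrum.notMem_iff.mp fun hσ => (hCL _ hσ).ne (hμ k)
    obtain ⟨p, hp⟩ :=
      exists_add_eq_smul_of_mem_resolventSet hμk (Be Bd Dd E F G₂ (Pi.single k 1))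
    exact ⟨p, hp, output_eq_zero_of_solvesORP h (hμ k) (pi_smul_proj_apply_single μ k) hp⟩
  · intro h
    choose p hp using h
    exact solvesORP_of_sylvester hCL _ (sylvester_of_diagonal fun k => (hp k).1)
      (comp_sum_smulRight_add_eq_zero fun k => (hp k).2)

/-- If each `μ_k` lies in the resolvent set of `A` and the closed-loop
system is exponentially stable, the controller solves the output regulation problem
iff the equations `P(μ_k) K z_k = −F φ_k − P_d(μ_k) E φ_k`, `(μ_k − G₁) z_k = 0`
are solvable for every `k`. -/
theorem orp_iff_regulator_constraints
    {X Z U Ud Y : Type*}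
    [NormedAddCommGroup X] [NormedSpace ℂ X] [CompleteSpace X]
    [NormedAddCommGroup Z] [NormedSpace ℂ Z] [CompleteSpace Z]
    [NormedAddCommGroup U] [InnerProductSpace ℂ U] [CompleteSpace U]
    [NormedAddCommGroup Ud] [InnerProductSpace ℂ Ud] [CompleteSpace Ud]
    [NormedAddCommGroup Y] [InnerProductSpace ℂ Y] [CompleteSpace Y]
    (A : X →L[ℂ] X) (B : U →L[ℂ] X) (Bd : Ud →L[ℂ] X)
    (C : X →L[ℂ] Y) (D : U →L[ℂ] Y) (Dd : Ud →L[ℂ] Y)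
    (q : ℕ) (μ : Fin q → ℂ) (hμ : ∀ k, ‖μ k‖ = 1)
    (E : (Fin q → ℂ) →L[ℂ] Ud) (F : (Fin q → ℂ) →L[ℂ] Y)
    (G₁ : Z →L[ℂ] Z) (G₂ : Y →L[ℂ] Z) (K : Z →L[ℂ] U)
    (hres : ∀ k, μ k ∈ resolventSet ℂ A)
    (hCL : ∀ lam ∈ spectrum ℂ (Ae A B C D G₁ G₂ K), ‖lam‖ < 1) :
    SolvesORP A B Bd C D Dd
        (ContinuousLinearMap.pi fun k => μ k • ContinuousLinearMap.proj k) E F G₁ G₂ K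
      ↔ ∀ k : Fin q, ∃ zk : Z,
          (C (Ring.inverse (algebraMap ℂ (X →L[ℂ] X) (μ k) - A) (B (K zk))) + D (K zk))
            = -(F (Pi.single k 1))
              - (C (Ring.inverse (algebraMap ℂ (X →L[ℂ] X) (μ k) - A)
                    (Bd (E (Pi.single k 1)))) + Dd (E (Pi.single k 1)))
          ∧ μ k • zk - G₁ zk = 0 :=
  orp_iff_regulator_constraints_general A B Bd C D Dd q μ hμ E F G₁ G₂ K hres hCL
end
end

section
/- Assume 1 lies in the resolvent set of A, let Z be a complex Banach space, let G₂ : Y → Z and K₀ : Z → U be bounded, let Q : Z → Z be a bounded operator with bounded inverse, let ε > 0, and set G₁ = I_Z, K = ε K₀ Q, and H = −(I − A)⁻¹ B K₀ Q : Z → X. Then the closed-loop operator A_e on X × Z is boundedly similar to the block operator [[A + ε H G₂ C, −ε² H G₂ P(1) K₀ Q], [−G₂ C, I + ε G₂ P(1) K₀ Q]]; that is, there exists a continuous linear automorphism T of X × Z such that T ∘ A_e ∘ T⁻¹ equals the operator (x, z) ↦ ((A + ε H G₂ C)x − ε² H G₂ P(1) K₀ Q z, −G₂ C x + z + ε G₂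 P(1) K₀ Q z). -/
noncomputable section

open ContinuousLinearMap

variable {X Z U Ud Y W : Type*}
  [NormedAddCommGroup X] [NormedSpace ℂ X]
  [NormedAddCommGroup Z] [NormedSpace ℂ Z]
  [NormedAddCommGroup U] [NormedSpace ℂ U]
  [NormedAddCommGroup Ud] [NormedSpace ℂ Ud]
  [NormedAddCommGroup Y] [NormedSpace ℂ Y]
  [NormedAddCommGroup W] [NormedSpace ℂ W]

/-- with `G₁ = I`, `K = ε K₀ Q` and `H = −(I−A)⁻¹ B K₀ Q`, the closed-loop
operator `A_e` is boundedly similar to the block operator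
`[[A + εHG₂C, −ε²HG₂P(1)K₀Q], [−G₂C, I + εG₂P(1)K₀Q]]`. -/
theorem closed_loop_operator_similarity
    {X Z U Y : Type*}
    [NormedAddCommGroup X] [NormedSpace ℂ X] [CompleteSpace X]
    [NormedAddCommGroup Z] [NormedSpace ℂ Z] [CompleteSpace Z]
    [NormedAddCommGroup U] [InnerProductSpace ℂ U] [CompleteSpace U]
    [NormedAddCommGroup Y] [InnerProductSpace ℂ Y] [CompleteSpace Y]
    (A : X →L[ℂ] X) (B : U →L[ℂ] X) (C : X →L[ℂ] Y) (D : U →L[ℂ] Y)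
    (G₂ : Y →L[ℂ] Z) (K₀ : Z →L[ℂ] U) (Q : Z ≃L[ℂ] Z)
    (ε : ℝ) (hε : 0 < ε)
    (hres : (1 : ℂ) ∈ resolventSet ℂ A) :
    ∃ T : (X × Z) ≃L[ℂ] (X × Z),
      (T : (X × Z) →L[ℂ] (X × Z)).comp
          ((Ae A B C D (1 : Z →L[ℂ] Z) G₂
              ((ε : ℂ) • (K₀.comp (Q : Z →L[ℂ] Z)))).comp
            (T.symm : (X × Z) →L[ℂ] (X × Z)))
        = ((A + (ε : ℂ) •
                ((-(((Ring.inverse ((1 : X →L[ℂ] X) - A)).comp B).comp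
                    (K₀.comp (Q : Z →L[ℂ] Z)))).comp (G₂.comp C))).comp (fst ℂ X Z)
            + (-(((ε : ℂ) ^ 2) •
                ((-(((Ring.inverse ((1 : X →L[ℂ] X) - A)).comp B).comp
                    (K₀.comp (Q : Z →L[ℂ] Z)))).comp
                  (G₂.comp
                    ((C.comp ((Ring.inverse ((1 : X →L[ℂ] X) - A)).comp B) + D).comp
                      (K₀.comp (Q : Z →L[ℂ] Z))))))).comp (snd ℂ X Z)).prod
          ((-(G₂.comp C)).comp (fst ℂ X Z) + (snd ℂ X Z)
            + (((ε : ℂ) •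
                (G₂.comp
                  ((C.comp ((Ring.inverse ((1 : X →L[ℂ] X) - A)).comp B) + D).comp
                    (K₀.comp (Q : Z →L[ℂ] Z))))).comp (snd ℂ X Z))) := by
  classical
  set R := Ring.inverse ((1 : X →L[ℂ] X) - A) with hRdef
  have hu : IsUnit ((1 : X →L[ℂ] X) - A) := by
    have h := hres
    rw [resolventSet] at h
    simpa using h
  have hAR : ∀ w : X, A (R w) = R w - w := by
    intro w
    have h := Ring.mul_inverse_cancel _ hu
    have h2 : (((1 : X →L[ℂ] X) - A) * R) w = (1 : X →L[ℂ] X) w := by rw [h]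
    simp only [ContinuousLinearMap.mul_apply, ContinuousLinearMap.sub_apply,
      ContinuousLinearMap.one_apply] at h2
    -- h2 : R w - A (R w) = w
    have : A (R w) = R w - w := by
      have := h2
      abel_nf at this ⊢
      linear_combination (norm := abel) -this
    exact this
  set L : Z →L[ℂ] U := K₀.comp (Q : Z →L[ℂ] Z) with hL
  set Hc : Z →L[ℂ] X := -(((R).comp B).comp L) with hHc
  set f : (X × Z) →L[ℂ] (X × Z) :=
    (fst ℂ X Z + (((ε : ℂ) • Hc).comp (snd ℂ X Z))).prod (-(snd ℂ X Z)) with hf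
  have hinv : Function.LeftInverse f f := by
    intro p
    simp [hf, Prod.ext_iff]
  refine ⟨ContinuousLinearEquiv.equivOfInverse f f hinv hinv, ?_⟩
  ext p
  all_goals
    simp only [ContinuousLinearMap.comp_apply, ContinuousLinearEquiv.coe_coe,
      ContinuousLinearEquiv.symm_equivOfInverse, ContinuousLinearEquiv.equivOfInverse_apply,
      hf, Ae, hHc]
    simp only [ContinuousLinearMap.prod_apply, ContinuousLinearMap.add_apply,
      ContinuousLinearMap.comp_apply, ContinuousLinearMap.coe_fst', ContinuousLinearMap.coe_snd',
      ContinuousLinearMap.neg_apply, ContinuousLinearMap.smul_apply, ContinuousLinearMap.one_apply,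
      ContinuousLinearMap.sub_apply, map_add, map_neg, map_smul, hAR, smul_sub, smul_add, smul_neg]
    module
end
end

section
/- Assume the discrete-time system is exponentially stable (|λ| < 1 for all λ in the spectrum of A), the exosystem is one-dimensional with q = 1 and S = 1 ∈ ℂ, and the transfer function value P(1) : U → Y is surjective. Let Z be a complex Hilbert space, set G₁ = I_Z, let G₂ : Y → Z be a bounded operator with bounded inverse, and let K₀ : Z → U be a bounded operator such that the spectrum of G₂ P(1) K₀ : Z → Z is contained in the open left half-plane {λ ∈ ℂ : Re λ < 0}. Then there exists ε* > 0 such that for every 0 < ε ≤ ε* the controller (G₁, G₂, ε K₀) solves the robust output regulation problem. -/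
noncomputable section

open ContinuousLinearMap

variable {X Z U Ud Y W : Type*}
  [NormedAddCommGroup X] [NormedSpace ℂ X]
  [NormedAddCommGroup Z] [NormedSpace ℂ Z]
  [NormedAddCommGroup U] [NormedSpace ℂ U]
  [NormedAddCommGroup Ud] [NormedSpace ℂ Ud]
  [NormedAddCommGroup Y] [NormedSpace ℂ Y]
  [NormedAddCommGroup W] [NormedSpace ℂ W]

/-!
For `|λ| ≥ 1` the point `λ` lies in the resolvent set of `A`, and a Schur complement shows that
`λ - A_e` is invertible as soon as `(λ - 1) - ε G₂ P(λ) K₀` is. Away from `1` the term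
`ε G₂ P(λ) K₀` is too small to cancel `λ - 1`. Near `1`, the inequality
`2 Re (λ - 1) ≥ -|λ - 1|²` (valid for `|λ| ≥ 1`) puts `(λ - 1) / ε` in a half-plane `Re z ≥ -a`
on which `G₂ P(1) K₀` has a uniformly bounded resolvent, and `G₂ P(λ) K₀` is a small
perturbation of `G₂ P(1) K₀`. Hence the closed loop is exponentially stable for small `ε`.

Because `G₁ = I`, at the equilibrium `(I - A_e)⁻¹ B_e v₀` forced by the constant exosystem the
controller equation reads `z = z + G₂ e`, so the error vanishes there (internal model). The
error is then `C_e A_eⁿ` applied to the initial deviation and decays like `‖A_eⁿ‖`, by Gelfand's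
formula. This argument uses nothing about the plant beyond closed-loop stability, which gives
robustness.
-/

open Filter Asymptotics
open scoped NNReal

section PowerDecay

variable {𝒜 : Type*} [NormedRing 𝒜] [NormedAlgebra ℂ 𝒜] [CompleteSpace 𝒜]

theorem exists_norm_pow_le_of_spectralRadius_lt {a : 𝒜} {r : ℝ≥0}
    (hr : spectralRadius ℂ a < r) : ∃ C : ℝ, ∀ n : ℕ, ‖a ^ n‖ ≤ C * r ^ n := by
  have hr₀ : 0 < r := ENNReal.coe_pos.mp (zero_le.trans_lt hr)
  have hev : ∀ᶠ n : ℕ in atTop, ‖a ^ n‖ ≤ 1 * ‖(r : ℝ) ^ n‖ := by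
    filter_upwards
      [(spectrum.pow_nnnorm_pow_one_div_tendsto_nhds_spectralRadius a).eventually_lt_const hr,
        eventually_ge_atTop 1] with n hn hn₁
    have hn₀ : (0 : ℝ) < n := by exact_mod_cast hn₁
    rw [← ENNReal.coe_rpow_of_nonneg _ (by positivity), ENNReal.coe_lt_coe, one_div,
      NNReal.rpow_inv_lt_iff hn₀, NNReal.rpow_natCast] at hn
    rw [one_mul, Real.norm_of_nonneg (by positivity)]
    exact_mod_cast hn.le
  obtain ⟨C, hC⟩ := (isBigO_nat_atTop_iff fun n h => absurd h (pow_ne_zero n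
    (NNReal.coe_ne_zero.mpr hr₀.ne'))).mp (IsBigO.of_bound 1 hev)
  exact ⟨C, fun n => by simpa [abs_of_nonneg] using hC n⟩

theorem spectralRadius_lt_one_of_forall_norm_lt_one_s12 {a : 𝒜}
    (h : ∀ z ∈ spectrum ℂ a, ‖z‖ < 1) : spectralRadius ℂ a < 1 := by
  rcases (spectrum ℂ a).eq_empty_or_nonempty with hσ | hσ
  · simp [spectralRadius, hσ]
  · exact_mod_cast spectrum.spectralRadius_lt_of_forall_lt_of_nonempty hσ
      fun z hz => by exact_mod_cast h z hz

theorem exists_norm_pow_le_mul_exp_of_forall_norm_lt_one {a : 𝒜}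
    (h : ∀ z ∈ spectrum ℂ a, ‖z‖ < 1) :
    ∃ M α : ℝ, 0 < M ∧ 0 < α ∧ ∀ n : ℕ, ‖a ^ n‖ ≤ M * Real.exp (-(α * n)) := by
  obtain ⟨r, hρr, hr₁⟩ := ENNReal.lt_iff_exists_nnreal_btwn.mp
    (spectralRadius_lt_one_of_forall_norm_lt_one_s12 h)
  have hr₀ : (0 : ℝ) < r := ENNReal.coe_pos.mp (zero_le.trans_lt hρr)
  have hr₁ : (r : ℝ) < 1 := by exact_mod_cast hr₁
  obtain ⟨C, hC⟩ := exists_norm_pow_le_of_spectralRadius_lt hρr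
  refine ⟨max C 1, -Real.log r, by positivity, by linarith [Real.log_neg hr₀ hr₁], fun n => ?_⟩
  rw [neg_mul, neg_neg, mul_comm (Real.log _), Real.exp_nat_mul, Real.exp_log hr₀]
  exact (hC n).trans (by gcongr; exact le_max_left _ _)

end PowerDecay

section Schur

variable {𝕜 E F : Type*} [NontriviallyNormedField 𝕜] [NormedAddCommGroup E] [NormedSpace 𝕜 E]
  [NormedAddCommGroup F] [NormedSpace 𝕜 F]

theorem isUnit_prod_coprod_of_isUnit_schur {P : E →L[𝕜] E} {Q : F →L[𝕜] E} {R : E →L[𝕜] F}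
    {S : F →L[𝕜] F} (hP : IsUnit P) (hT : IsUnit (S - R ∘L Ring.inverse P ∘L Q)) :
    IsUnit ((P.coprod Q).prod (R.coprod S)) := by
  set p := Ring.inverse P
  set t := Ring.inverse (S - R ∘L p ∘L Q)
  have hPp (w : E) : P (p w) = w := congr($(Ring.mul_inverse_cancel P hP) w)
  have hpP (w : E) : p (P w) = w := congr($(Ring.inverse_mul_cancel P hP) w)
  have hSt (w : F) : S (t w) = w + R (p (Q (t w))) := by
    have := congr($(Ring.mul_inverse_cancel _ hT) w)
    simp only [mul_apply_eq_comp, sub_apply, comp_apply, one_apply_eq_self] at this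
    exact eq_add_of_sub_eq this
  have htS (w : F) : t (S w) = w + t (R (p (Q w))) := by
    have := congr($(Ring.inverse_mul_cancel _ hT) w)
    simp only [mul_apply_eq_comp, sub_apply, comp_apply, one_apply_eq_self, map_sub] at this
    exact eq_add_of_sub_eq this
  -- the inverse of `[[P, Q], [R, S]]` by block Gaussian elimination
  set N := ((p + p ∘L Q ∘L t ∘L R ∘L p).coprod (-(p ∘L Q ∘L t))).prod
    ((-(t ∘L R ∘L p)).coprod t)
  refine ⟨⟨(P.coprod Q).prod (R.coprod S), N, ?_, ?_⟩, rfl⟩ <;>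
    refine ContinuousLinearMap.ext fun w => Prod.ext ?_ ?_ <;>
    simp only [N, mul_apply_eq_comp, prod_apply, coprod_apply, add_apply, neg_apply, comp_apply,
      one_apply_eq_self, map_add, map_neg, hPp, hpP, hSt, htS] <;> abel

end Schur

theorem neg_sq_norm_sub_one_le_two_mul_re {lam : ℂ} (h : 1 ≤ ‖lam‖) :
    -‖lam - 1‖ ^ 2 ≤ 2 * (lam - 1).re := by
  have h1 : 1 ≤ ‖lam‖ ^ 2 := by nlinarith
  rw [Complex.sq_norm, Complex.normSq_apply] at h1
  rw [Complex.sq_norm, Complex.normSq_apply]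
  simp only [Complex.sub_re, Complex.one_re, Complex.sub_im, Complex.one_im, sub_zero]
  nlinarith

section LowGain

variable {𝒜 : Type*} [NormedRing 𝒜] [NormedAlgebra ℂ 𝒜] [CompleteSpace 𝒜]

theorem exists_forall_norm_resolvent_le_of_isClosed (a : 𝒜) {s : Set ℂ} (hs : IsClosed s)
    (hρ : s ⊆ resolventSet ℂ a) : ∃ m : ℝ, ∀ z ∈ s, ‖resolvent a z‖ ≤ m := by
  obtain ⟨R, -, hR⟩ := hasBasis_cobounded_norm.eventually_iff.mp
    ((spectrum.resolvent_tendsto_cobounded (𝕜 := ℂ) a).norm.eventually_le_const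
      (by simp : ‖(0 : 𝒜)‖ < 1))
  have hcont : ContinuousOn (resolvent a) (s ∩ Metric.closedBall 0 R) := fun z hz =>
    (spectrum.hasDerivAt_resolvent_const_left (hρ hz.1)).continuousAt.continuousWithinAt
  obtain ⟨C, hC⟩ := (isCompact_closedBall 0 R).inter_left hs |>.exists_bound_of_continuousOn hcont
  refine ⟨max C 1, fun z hz => ?_⟩
  rcases le_or_gt ‖z‖ R with hz' | hz'
  · exact (hC z ⟨hz, by simpa using hz'⟩).trans (le_max_left _ _)
  · exact (hR hz'.le).trans (le_max_right _ _)

theorem exists_pos_forall_mem_spectrum_re_lt {b : 𝒜} (h : ∀ z ∈ spectrum ℂ b, z.re < 0) :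
    ∃ a > 0, ∀ z ∈ spectrum ℂ b, z.re < -a := by
  rcases (spectrum ℂ b).eq_empty_or_nonempty with hσ | hσ
  · exact ⟨1, one_pos, by simp [hσ]⟩
  obtain ⟨z₀, hz₀, hmax⟩ :=
    (spectrum.isCompact b).exists_isMaxOn hσ Complex.continuous_re.continuousOn
  have := h z₀ hz₀
  exact ⟨-z₀.re / 2, by linarith, fun z hz => by linarith [show z.re ≤ z₀.re from hmax hz]⟩

theorem exists_pos_forall_re_ge_norm_resolvent_le {b : 𝒜} (h : ∀ z ∈ spectrum ℂ b, z.re < 0) :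
    ∃ a > 0, ∃ m : ℝ, ∀ z : ℂ, -a ≤ z.re → z ∈ resolventSet ℂ b ∧ ‖resolvent b z‖ ≤ m := by
  obtain ⟨a, ha, hgap⟩ := exists_pos_forall_mem_spectrum_re_lt h
  have hρ : {z : ℂ | -a ≤ z.re} ⊆ resolventSet ℂ b := fun z hz =>
    spectrum.mem_resolventSet_iff.mpr <| spectrum.notMem_iff.mp fun hσ => by
      linarith [hgap z hσ, show -a ≤ z.re from hz]
  obtain ⟨m, hm⟩ := exists_forall_norm_resolvent_le_of_isClosed b
    (isClosed_le continuous_const Complex.continuous_re) hρ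
  exact ⟨a, ha, m, fun z hz => ⟨hρ hz, hm z hz⟩⟩

theorem mem_resolventSet_of_norm_sub_mul_norm_resolvent_lt_one {b c : 𝒜} {z : ℂ}
    (hz : z ∈ resolventSet ℂ b) (h : ‖c - b‖ * ‖resolvent b z‖ < 1) :
    z ∈ resolventSet ℂ c := by
  set r := resolvent b z
  have hr : (algebraMap ℂ 𝒜 z - b) * r = 1 := Ring.mul_inverse_cancel _ hz
  have hsmall : ‖r * (c - b)‖ < 1 := (norm_mul_le _ _).trans_lt (by rwa [mul_comm])
  have hfactor : algebraMap ℂ 𝒜 z - c = (algebraMap ℂ 𝒜 z - b) * (1 - r * (c - b)) := by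
    rw [mul_sub, mul_one, ← mul_assoc, hr, one_mul]
    abel
  rw [spectrum.mem_resolventSet_iff, hfactor]
  exact hz.mul (isUnit_one_sub_of_norm_lt_one hsmall)

theorem exists_forall_sub_one_notMem_spectrum_smul {Q : ℂ → 𝒜} {L : ℝ}
    (hL : ∀ lam : ℂ, 1 ≤ ‖lam‖ → ‖Q lam‖ ≤ L) (hQ : ContinuousAt Q 1)
    (hspec : ∀ z ∈ spectrum ℂ (Q 1), z.re < 0) :
    ∃ εstar > 0, ∀ ε : ℝ, 0 < ε → ε ≤ εstar → ∀ lam : ℂ, 1 ≤ ‖lam‖ →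
      lam - 1 ∉ spectrum ℂ ((ε : ℂ) • Q lam) := by
  obtain ⟨a, ha, m, hm⟩ := exists_pos_forall_re_ge_norm_resolvent_le hspec
  have hm₀ : 0 ≤ m := (norm_nonneg _).trans (hm 0 (by simpa using ha.le)).2
  obtain ⟨δ, hδ, hQδ⟩ := Metric.continuousAt_iff.mp hQ (m + 1)⁻¹ (by positivity)
  have hL₀ : 0 ≤ L := (norm_nonneg _).trans (hL 1 (by simp))
  set c := L * ‖(1 : 𝒜)‖
  have hc₀ : 0 ≤ c := by positivity
  refine ⟨min (2 * a / (c ^ 2 + 1)) (δ / (c + 1)),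
    lt_min (div_pos (by linarith) (by positivity)) (div_pos hδ (by positivity)),
    fun ε hε hεle lam hlam => ?_⟩
  have hεa : ε * (c ^ 2 + 1) ≤ 2 * a :=
    (le_div_iff₀ (by positivity)).mp (hεle.trans (min_le_left _ _))
  have hεδ : ε * (c + 1) ≤ δ := (le_div_iff₀ (by positivity)).mp (hεle.trans (min_le_right _ _))
  have hεQ : ‖(ε : ℂ) • Q lam‖ * ‖(1 : 𝒜)‖ ≤ ε * c := by
    rw [norm_smul, Complex.norm_real, Real.norm_of_nonneg hε.le, mul_assoc]
    gcongr
    exact mul_le_mul_of_nonneg_right (hL lam hlam) (norm_nonneg _)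
  rcases lt_or_ge (ε * c) ‖lam - 1‖ with hfar | hnear
  · -- far from `1` the perturbation `ε Q lam` is smaller than `lam - 1`
    exact fun h => h (spectrum.mem_resolventSet_of_norm_lt_mul (hεQ.trans_lt hfar))
  -- near `1`, `(lam - 1) / ε` lies in the half-plane where `Q 1` has a bounded resolvent
  have hε₀ : (ε : ℂ) ≠ 0 := by exact_mod_cast hε.ne'
  set z := (lam - 1) / (ε : ℂ)
  have hz : -a ≤ z.re := by
    rw [Complex.div_ofReal_re, le_div_iff₀ hε]
    nlinarith [neg_sq_norm_sub_one_le_two_mul_re hlam, norm_nonneg (lam - 1)]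
  obtain ⟨hzρ, hzm⟩ := hm z hz
  have hclose : ‖Q lam - Q 1‖ < (m + 1)⁻¹ := by
    rw [← dist_eq_norm]
    exact hQδ (by rw [dist_eq_norm]; nlinarith)
  have hzρ' : z ∈ resolventSet ℂ (Q lam) := by
    refine mem_resolventSet_of_norm_sub_mul_norm_resolvent_lt_one hzρ ?_
    calc ‖Q lam - Q 1‖ * ‖resolvent (Q 1) z‖ ≤ (m + 1)⁻¹ * m := by gcongr
      _ < 1 := by rw [inv_mul_lt_one₀ (by positivity)]; linarith
  have hscale : lam - 1 = Units.mk0 (ε : ℂ) hε₀ • z := by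
    rw [Units.smul_mk0, smul_eq_mul, mul_div_cancel₀ _ hε₀]
  rw [hscale, show (ε : ℂ) • Q lam = Units.mk0 (ε : ℂ) hε₀ • Q lam from rfl,
    spectrum.smul_mem_smul_iff]
  exact fun h => h hzρ'

end LowGain

def transferFunction (A : X →L[ℂ] X) (B : U →L[ℂ] X) (C : X →L[ℂ] Y) (D : U →L[ℂ] Y)
    (lam : ℂ) : U →L[ℂ] Y :=
  C ∘L resolvent A lam ∘L B + D

theorem transferFunction_one (A : X →L[ℂ] X) (B : U →L[ℂ] X) (C : X →L[ℂ] Y) (D : U →L[ℂ] Y) :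
    transferFunction A B C D 1 = C.comp ((Ring.inverse ((1 : X →L[ℂ] X) - A)).comp B) + D := by
  simp [transferFunction, resolvent]

theorem continuousAt_transferFunction [CompleteSpace X] (A : X →L[ℂ] X) (B : U →L[ℂ] X)
    (C : X →L[ℂ] Y) (D : U →L[ℂ] Y) {lam : ℂ} (h : lam ∈ resolventSet ℂ A) :
    ContinuousAt (transferFunction A B C D) lam :=
  (continuousAt_const.clm_comp
    ((spectrum.hasDerivAt_resolvent_const_left h).continuousAt.clm_comp continuousAt_const)).add
    continuousAt_const

theorem exists_forall_norm_transferFunction_le [CompleteSpace X] (A : X →L[ℂ] X)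
    (B : U →L[ℂ] X) (C : X →L[ℂ] Y) (D : U →L[ℂ] Y) {s : Set ℂ} (hs : IsClosed s)
    (hρ : s ⊆ resolventSet ℂ A) : ∃ L : ℝ, ∀ lam ∈ s, ‖transferFunction A B C D lam‖ ≤ L := by
  obtain ⟨m, hm⟩ := exists_forall_norm_resolvent_le_of_isClosed A hs hρ
  refine ⟨‖C‖ * (m * ‖B‖) + ‖D‖, fun lam hlam => ?_⟩
  calc ‖transferFunction A B C D lam‖
      ≤ ‖C ∘L resolvent A lam ∘L B‖ + ‖D‖ := norm_add_le _ _
    _ ≤ ‖C‖ * (‖resolvent A lam‖ * ‖B‖) + ‖D‖ := by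
      gcongr
      exact (opNorm_comp_le _ _).trans (by gcongr; exact opNorm_comp_le _ _)
    _ ≤ ‖C‖ * (m * ‖B‖) + ‖D‖ := by gcongr; exact hm lam hlam

theorem mem_resolventSet_Ae {A : X →L[ℂ] X} {B : U →L[ℂ] X} {C : X →L[ℂ] Y} {D : U →L[ℂ] Y}
    {G₁ : Z →L[ℂ] Z} {G₂ : Y →L[ℂ] Z} {K : Z →L[ℂ] U} {lam : ℂ} (hA : lam ∈ resolventSet ℂ A)
    (h : IsUnit (algebraMap ℂ _ lam - G₁ - G₂ ∘L transferFunction A B C D lam ∘L K)) :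
    lam ∈ resolventSet ℂ (Ae A B C D G₁ G₂ K) := by
  have hblock : algebraMap ℂ _ lam - Ae A B C D G₁ G₂ K =
      ((algebraMap ℂ _ lam - A).coprod (-(B ∘L K))).prod
        ((-(G₂ ∘L C)).coprod (algebraMap ℂ _ lam - G₁ - G₂ ∘L D ∘L K)) := by
    refine ContinuousLinearMap.ext fun w => Prod.ext ?_ ?_ <;>
      simp only [Ae, Algebra.algebraMap_eq_smul_one, ContinuousLinearMap.prod_apply, coprod_apply,
        sub_apply, add_apply, neg_apply, smul_apply, comp_apply, one_apply_eq_self, coe_fst',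
        coe_snd', Prod.fst_sub, Prod.snd_sub, Prod.smul_fst, Prod.smul_snd] <;> abel
  rw [spectrum.mem_resolventSet_iff, hblock]
  refine isUnit_prod_coprod_of_isUnit_schur (spectrum.mem_resolventSet_iff.mp hA) ?_
  convert h using 1
  refine ContinuousLinearMap.ext fun w => ?_
  simp only [transferFunction, resolvent, ContinuousLinearMap.algebraMap_apply, sub_apply,
    add_apply, comp_apply, comp_neg, neg_comp, neg_neg, add_comp, comp_add]
  abel

theorem exists_forall_spectrum_Ae_smul_norm_lt_one [CompleteSpace X] [CompleteSpace Z]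
    (A : X →L[ℂ] X) (B : U →L[ℂ] X) (C : X →L[ℂ] Y) (D : U →L[ℂ] Y)
    (hstab : ∀ lam ∈ spectrum ℂ A, ‖lam‖ < 1) (G₂ : Y →L[ℂ] Z) (K₀ : Z →L[ℂ] U)
    (hspec : ∀ z ∈ spectrum ℂ (G₂ ∘L transferFunction A B C D 1 ∘L K₀), z.re < 0) :
    ∃ εstar > 0, ∀ ε : ℝ, 0 < ε → ε ≤ εstar →
      ∀ lam ∈ spectrum ℂ (Ae A B C D 1 G₂ ((ε : ℂ) • K₀)), ‖lam‖ < 1 := by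
  have hρ : {lam : ℂ | 1 ≤ ‖lam‖} ⊆ resolventSet ℂ A := fun lam hlam =>
    spectrum.mem_resolventSet_iff.mpr <| spectrum.notMem_iff.mp fun hσ =>
      (hstab lam hσ).not_ge hlam
  obtain ⟨L, hL⟩ := exists_forall_norm_transferFunction_le A B C D
    (isClosed_le continuous_const continuous_norm) hρ
  have hQL (lam : ℂ) (hlam : 1 ≤ ‖lam‖) :
      ‖G₂ ∘L transferFunction A B C D lam ∘L K₀‖ ≤ ‖G₂‖ * (L * ‖K₀‖) :=
    (opNorm_comp_le _ _).trans (by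
      gcongr
      exact (opNorm_comp_le _ _).trans (by gcongr; exact hL lam hlam))
  have hQcont : ContinuousAt (fun lam => G₂ ∘L transferFunction A B C D lam ∘L K₀) 1 :=
    continuousAt_const.clm_comp
      ((continuousAt_transferFunction A B C D (hρ (by simp))).clm_comp continuousAt_const)
  obtain ⟨εstar, hεstar, hlow⟩ := exists_forall_sub_one_notMem_spectrum_smul hQL hQcont hspec
  refine ⟨εstar, hεstar, fun ε hε hεle lam hlam => ?_⟩
  by_contra! h
  refine hlam (mem_resolventSet_Ae (hρ h) ?_)
  convert spectrum.notMem_iff.mp (hlow ε hε hεle lam h) using 1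
  simp [map_sub]

theorem sub_eq_pow_apply_of_forall_eq_add {T : X →L[ℂ] X} {b xs : X} {x : ℕ → X}
    (hxs : T xs + b = xs) (hx : ∀ n, x (n + 1) = T (x n) + b) (n : ℕ) :
    x n - xs = (T ^ n) (x 0 - xs) := by
  induction n with
  | zero => simp
  | succ n ih =>
    rw [hx n, pow_succ', mul_apply_eq_comp, ← ih, map_sub]
    linear_combination (norm := module) hxs

theorem apply_inverse_one_sub_add_eq {T : X →L[ℂ] X} (hT : IsUnit (1 - T)) (b : X) :
    T (Ring.inverse (1 - T) b) + b = Ring.inverse (1 - T) b := by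
  have h := congr($(Ring.mul_inverse_cancel _ hT) b)
  simp only [mul_apply_eq_comp, sub_apply, one_apply_eq_self] at h
  nth_rw 2 [← h]
  abel

theorem norm_mk_sub_le {E F : Type*} [SeminormedAddCommGroup E] [SeminormedAddCommGroup F]
    (x : E) (z : F) (y : E × F) : ‖(x, z) - y‖ ≤ ‖x‖ + ‖z‖ + ‖y‖ :=
  (norm_sub_le _ _).trans (by
    gcongr
    exact max_le (le_add_of_nonneg_right (norm_nonneg z)) (le_add_of_nonneg_left (norm_nonneg x)))

-- The internal model: with `G₁ = I` the controller state is at rest only where `G₂ e = 0`.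
theorem Ce_add_De_eq_zero_of_Ae_one_add_Be_eq_self (A : X →L[ℂ] X) (B : U →L[ℂ] X)
    (Bd : Ud →L[ℂ] X) (C : X →L[ℂ] Y) (D : U →L[ℂ] Y) (Dd : Ud →L[ℂ] Y) (E : W →L[ℂ] Ud)
    (F : W →L[ℂ] Y) {G₂ : Y →L[ℂ] Z} (hG₂ : Function.Injective G₂) (K : Z →L[ℂ] U)
    {x : X × Z} {v : W} (hx : Ae A B C D 1 G₂ K x + Be Bd Dd E F G₂ v = x) :
    Ce C D K x + De Dd E F v = 0 := by
  refine hG₂ ?_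
  have hsnd := congr_arg Prod.snd hx
  simp only [Ae, Be, add_apply, ContinuousLinearMap.prod_apply, comp_apply, coe_fst', coe_snd',
    one_apply_eq_self, Prod.snd_add, map_add] at hsnd
  simp only [Ce, De, add_apply, comp_apply, coe_fst', coe_snd', map_add, map_zero]
  linear_combination (norm := module) hsnd

-- The second conjunct of `SolvesORP`, and the conclusion of the robustness clause of `SolvesRORP`.
def ErrorDecays (A : X →L[ℂ] X) (B : U →L[ℂ] X) (Bd : Ud →L[ℂ] X)
    (C : X →L[ℂ] Y) (D : U →L[ℂ] Y) (Dd : Ud →L[ℂ] Y)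
    (S : W →L[ℂ] W) (E : W →L[ℂ] Ud) (F : W →L[ℂ] Y)
    (G₁ : Z →L[ℂ] Z) (G₂ : Y →L[ℂ] Z) (K : Z →L[ℂ] U) : Prop :=
  ∃ M α : ℝ, 0 < M ∧ 0 < α ∧
    ∀ (x₀ : X) (z₀ : Z) (v₀ : W) (v : ℕ → W) (xe : ℕ → X × Z),
      v 0 = v₀ → (∀ n, v (n + 1) = S (v n)) →
      xe 0 = (x₀, z₀) →
      (∀ n, xe (n + 1) = Ae A B C D G₁ G₂ K (xe n) + Be Bd Dd E F G₂ (v n)) →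
      ∀ n : ℕ, ‖Ce C D K (xe n) + De Dd E F (v n)‖
        ≤ M * Real.exp (-(α * n)) * (‖x₀‖ + ‖z₀‖ + ‖v₀‖)

theorem errorDecays_of_forall_norm_lt_one [CompleteSpace X] [CompleteSpace Z]
    (A : X →L[ℂ] X) (B : U →L[ℂ] X) (Bd : Ud →L[ℂ] X)
    (C : X →L[ℂ] Y) (D : U →L[ℂ] Y) (Dd : Ud →L[ℂ] Y) (E : W →L[ℂ] Ud) (F : W →L[ℂ] Y)
    {G₂ : Y →L[ℂ] Z} (hG₂ : Function.Injective G₂) (K : Z →L[ℂ] U)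
    (hcl : ∀ lam ∈ spectrum ℂ (Ae A B C D 1 G₂ K), ‖lam‖ < 1) :
    ErrorDecays A B Bd C D Dd 1 E F 1 G₂ K := by
  set T := Ae A B C D 1 G₂ K
  obtain ⟨M, α, hM, hα, hpow⟩ := exists_norm_pow_le_mul_exp_of_forall_norm_lt_one hcl
  have hunit : IsUnit (1 - T) := by
    rw [← map_one (algebraMap ℂ (X × Z →L[ℂ] X × Z))]
    exact spectrum.notMem_iff.mp fun h => by simpa using hcl 1 h
  set steady := Ring.inverse (1 - T) ∘L Be Bd Dd E F G₂
  have hsteady (v₀ : W) : T (steady v₀) + Be Bd Dd E F G₂ v₀ = steady v₀ :=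
    apply_inverse_one_sub_add_eq hunit _
  refine ⟨(‖Ce C D K‖ + 1) * M * (‖steady‖ + 1), α, by positivity, hα, ?_⟩
  intro x₀ z₀ v₀ v xe hv₀ hv hxe₀ hxe n
  have hv_const (n : ℕ) : v n = v₀ := by
    induction n with
    | zero => exact hv₀
    | succ k ih => rw [hv, one_apply_eq_self, ih]
  have herror : Ce C D K (xe n) + De Dd E F (v n)
      = Ce C D K ((T ^ n) ((x₀, z₀) - steady v₀)) := by
    rw [← hxe₀, ← sub_eq_pow_apply_of_forall_eq_add (hsteady v₀)
      (fun n => by rw [hxe, hv_const]) n, map_sub, hv_const]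
    linear_combination (norm := module)
      Ce_add_De_eq_zero_of_Ae_one_add_Be_eq_self A B Bd C D Dd E F hG₂ K (hsteady v₀)
  rw [herror]
  calc ‖Ce C D K ((T ^ n) ((x₀, z₀) - steady v₀))‖
      ≤ ‖Ce C D K‖ * (‖T ^ n‖ * ‖((x₀, z₀) : X × Z) - steady v₀‖) :=
        (Ce C D K).le_of_opNorm_le_of_le le_rfl ((T ^ n).le_opNorm _)
    _ ≤ (‖Ce C D K‖ + 1) * (M * Real.exp (-(α * n)) * (‖x₀‖ + ‖z₀‖ + ‖steady‖ * ‖v₀‖)) := by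
        gcongr
        · linarith
        · exact hpow n
        · exact (norm_mk_sub_le _ _ _).trans (by gcongr; exact steady.le_opNorm v₀)
    _ ≤ (‖Ce C D K‖ + 1) * (M * Real.exp (-(α * n)) *
          ((‖steady‖ + 1) * (‖x₀‖ + ‖z₀‖ + ‖v₀‖))) := by
        gcongr
        nlinarith [norm_nonneg x₀, norm_nonneg z₀, norm_nonneg v₀, norm_nonneg steady]
    _ = _ := by ring

theorem low_gain_controller_solves_rorp_general
    {X Z U Ud Y : Type*}
    [NormedAddCommGroup X] [NormedSpace ℂ X] [CompleteSpace X]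
    [NormedAddCommGroup Z] [InnerProductSpace ℂ Z] [CompleteSpace Z]
    [NormedAddCommGroup U] [InnerProductSpace ℂ U]
    [NormedAddCommGroup Ud] [InnerProductSpace ℂ Ud]
    [NormedAddCommGroup Y] [InnerProductSpace ℂ Y]
    (A : X →L[ℂ] X) (B : U →L[ℂ] X) (Bd : Ud →L[ℂ] X)
    (C : X →L[ℂ] Y) (D : U →L[ℂ] Y) (Dd : Ud →L[ℂ] Y)
    (hstab : ∀ lam ∈ spectrum ℂ A, ‖lam‖ < 1)
    (E : ℂ →L[ℂ] Ud) (F : ℂ →L[ℂ] Y)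
    (G₂ : Y ≃L[ℂ] Z) (K₀ : Z →L[ℂ] U)
    (hspec : ∀ lam ∈ spectrum ℂ
        ((G₂ : Y →L[ℂ] Z).comp
          ((C.comp ((Ring.inverse ((1 : X →L[ℂ] X) - A)).comp B) + D).comp K₀)),
      lam.re < 0) :
    ∃ εstar : ℝ, 0 < εstar ∧ ∀ ε : ℝ, 0 < ε → ε ≤ εstar →
      SolvesRORP A B Bd C D Dd (1 : ℂ →L[ℂ] ℂ) E F
        (1 : Z →L[ℂ] Z) (G₂ : Y →L[ℂ] Z) ((ε : ℂ) • K₀) := by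
  obtain ⟨εstar, hεstar, hstable⟩ := exists_forall_spectrum_Ae_smul_norm_lt_one A B C D hstab
    (G₂ : Y →L[ℂ] Z) K₀ (by rwa [transferFunction_one])
  refine ⟨εstar, hεstar, fun ε hε hεle => ⟨⟨hstable ε hε hεle, ?_⟩, ?_⟩⟩
  · exact errorDecays_of_forall_norm_lt_one A B Bd C D Dd E F G₂.injective _ (hstable ε hε hεle)
  · exact fun A' B' Bd' C' D' Dd' E' F' hcl =>
      errorDecays_of_forall_norm_lt_one A' B' Bd' C' D' Dd' E' F' G₂.injective _ hcl

/-- for an exponentially stable system with one-dimensional exosystem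
(`q = 1`, `S = 1`) and surjective `P(1)`, the controller `(I_Z, G₂, ε K₀)` with `G₂`
boundedly invertible and `σ(G₂P(1)K₀) ⊂ ℂ₋` solves the robust output regulation problem
for all sufficiently small `ε > 0`. -/
theorem low_gain_controller_solves_rorp
    {X Z U Ud Y : Type*}
    [NormedAddCommGroup X] [NormedSpace ℂ X] [CompleteSpace X]
    [NormedAddCommGroup Z] [InnerProductSpace ℂ Z] [CompleteSpace Z]
    [NormedAddCommGroup U] [InnerProductSpace ℂ U] [CompleteSpace U]
    [NormedAddCommGroup Ud] [InnerProductSpace ℂ Ud] [CompleteSpace Ud]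
    [NormedAddCommGroup Y] [InnerProductSpace ℂ Y] [CompleteSpace Y]
    (A : X →L[ℂ] X) (B : U →L[ℂ] X) (Bd : Ud →L[ℂ] X)
    (C : X →L[ℂ] Y) (D : U →L[ℂ] Y) (Dd : Ud →L[ℂ] Y)
    (hstab : ∀ lam ∈ spectrum ℂ A, ‖lam‖ < 1)
    (E : ℂ →L[ℂ] Ud) (F : ℂ →L[ℂ] Y)
    (hsurj : Function.Surjective
      ⇑(C.comp ((Ring.inverse ((1 : X →L[ℂ] X) - A)).comp B) + D))
    (G₂ : Y ≃L[ℂ] Z) (K₀ : Z →L[ℂ] U)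
    (hspec : ∀ lam ∈ spectrum ℂ
        ((G₂ : Y →L[ℂ] Z).comp
          ((C.comp ((Ring.inverse ((1 : X →L[ℂ] X) - A)).comp B) + D).comp K₀)),
      lam.re < 0) :
    ∃ εstar : ℝ, 0 < εstar ∧ ∀ ε : ℝ, 0 < ε → ε ≤ εstar →
      SolvesRORP A B Bd C D Dd (1 : ℂ →L[ℂ] ℂ) E F
        (1 : Z →L[ℂ] Z) (G₂ : Y →L[ℂ] Z) ((ε : ℂ) • K₀) :=
  low_gain_controller_solves_rorp_general A B Bd C D Dd hstab E F G₂ K₀ hspec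
end
end
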